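/- Let $T$ and $L$ be $\{0,1\}$-valued random variables with $\alpha = P(T=1) \in (0,1)$, accuracy $p = P(T=L) > 0$, $\beta = P(T=1,L=1)/p = 1/2$, and $0 < P(L=1) < 1$. Then the accuracy $p$ is a strictly increasing affine function of $r_{T,L}$: namely $p = 2\alpha(1-\alpha) + 2\alpha(1-\alpha) r_{T,L}$ with slope $2\alpha(1-\alpha) > 0$. -/

import Mathlib

/-!
Write `T` and `L` as the indicators of `A = {T = 1}` and `B = {L = 1}`. Then
`cov(T, L) = P(A ∩ B) - P(A) P(B)` and `Var T = α (1 - α)`, while the accuracy is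
`p = P(A ∩ B) + P(Aᶜ ∩ Bᶜ) = 1 - P(A) - P(B) + 2 P(A ∩ B)`. The hypothesis `β = 1/2` says
`P(A ∩ B) = p / 2`, which forces `P(B) = 1 - α`; so both variances equal `α (1 - α)`, and
`r = (p / 2 - α (1 - α)) / (α (1 - α))`, which rearranges to the claimed affine relation.
-/

open MeasureTheory ProbabilityTheory

/-- Covariance of two real random variables. -/
noncomputable def cov {Ω : Type*} [MeasurableSpace Ω] (μ : Measure Ω) (f g : Ω → ℝ) : ℝ :=
  ∫ ω, (f ω - ∫ x, f x ∂μ) * (g ω - ∫ x, g x ∂μ) ∂μ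

/-- Pearson correlation of two real random variables. -/
noncomputable def corr {Ω : Type*} [MeasurableSpace Ω] (μ : Measure Ω) (f g : Ω → ℝ) : ℝ :=
  cov μ f g / Real.sqrt (variance f μ * variance g μ)

section ZeroOneValued

variable {Ω M : Type*} [Zero M] [One M] [NeZero (1 : M)] {f g : Ω → M}

lemma indicator_setOf_eq_one_eq_self (hf : ∀ ω, f ω = 0 ∨ f ω = 1) :
    {ω | f ω = 1}.indicator 1 = f := by
  funext ω
  rcases hf ω with h | h <;> simp [h]

lemma setOf_eq_eq_inter_union_compl_inter_compl (hf : ∀ ω, f ω = 0 ∨ f ω = 1)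
    (hg : ∀ ω, g ω = 0 ∨ g ω = 1) :
    {ω | f ω = g ω} = {ω | f ω = 1} ∩ {ω | g ω = 1} ∪ {ω | f ω = 1}ᶜ ∩ {ω | g ω = 1}ᶜ := by
  ext ω
  rcases hf ω with h | h <;> rcases hg ω with h' | h' <;> simp [h, h']

end ZeroOneValued

section Indicator

variable {Ω : Type*} [MeasurableSpace Ω] {μ : Measure Ω} [IsProbabilityMeasure μ] {A B : Set Ω}

lemma measureReal_inter_add_compl_inter_compl (hA : MeasurableSet A) (hB : MeasurableSet B) :
    μ.real (A ∩ B) + μ.real (Aᶜ ∩ Bᶜ) = 1 - μ.real A - μ.real B + 2 * μ.real (A ∩ B) := by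
  rw [← Set.compl_union, probReal_compl_eq_one_sub (hA.union hB)]
  linarith [measureReal_union_add_inter (μ := μ) (s := A) hB]

lemma covariance_indicator_one (hA : MeasurableSet A) (hB : MeasurableSet B) :
    covariance (A.indicator 1) (B.indicator 1) μ = μ.real (A ∩ B) - μ.real A * μ.real B := by
  have hA2 : MemLp (A.indicator 1) 2 μ := memLp_indicator_const 2 hA (1 : ℝ) (.inr (by simp))
  have hB2 : MemLp (B.indicator 1) 2 μ := memLp_indicator_const 2 hB (1 : ℝ) (.inr (by simp))
  rw [covariance_eq_sub hA2 hB2,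
    ← Set.inter_indicator_one, integral_indicator_one hA, integral_indicator_one hB,
    integral_indicator_one (hA.inter hB)]

lemma variance_indicator_one (hA : MeasurableSet A) :
    variance (A.indicator 1) μ = μ.real A * (1 - μ.real A) := by
  rw [← covariance_self (measurable_one.indicator hA).aemeasurable, covariance_indicator_one hA hA,
    Set.inter_self]
  ring

lemma corr_indicator_one (hA : MeasurableSet A) (hB : MeasurableSet B) :
    corr μ (A.indicator 1) (B.indicator 1) = (μ.real (A ∩ B) - μ.real A * μ.real B) /
      √(μ.real A * (1 - μ.real A) * (μ.real B * (1 - μ.real B))) := by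
  rw [corr, cov, ← covariance, covariance_indicator_one hA hB, variance_indicator_one hA,
    variance_indicator_one hB]

end Indicator

theorem stmt10_general {Ω : Type*} [MeasurableSpace Ω] (μ : Measure Ω) [IsProbabilityMeasure μ]
    (T L : Ω → ℝ) (hTm : Measurable T) (hLm : Measurable L)
    (hT01 : ∀ ω, T ω = 0 ∨ T ω = 1) (hL01 : ∀ ω, L ω = 0 ∨ L ω = 1)
    (α p : ℝ)
    (hα : α = (μ {ω | T ω = 1}).toReal)
    (hp : p = (μ {ω | T ω = L ω}).toReal)
    (hβ : (μ {ω | T ω = 1 ∧ L ω = 1}).toReal / p = 1 / 2)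
    (hα0 : 0 < α) (hα1 : α < 1) (hp0 : 0 < p) :
    p = 2 * α * (1 - α) + 2 * α * (1 - α) * corr μ T L ∧ 0 < 2 * α * (1 - α) := by
  set A := {ω | T ω = 1}
  set B := {ω | L ω = 1}
  have hA : MeasurableSet A := hTm (measurableSet_singleton 1)
  have hB : MeasurableSet B := hLm (measurableSet_singleton 1)
  have hα' : μ.real A = α := hα.symm
  have hTL : {ω | T ω = L ω} = A ∩ B ∪ Aᶜ ∩ Bᶜ :=
    setOf_eq_eq_inter_union_compl_inter_compl hT01 hL01
  have hp' : μ.real (A ∩ B) + μ.real (Aᶜ ∩ Bᶜ) = p := by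
    rw [hp, hTL]
    exact (measureReal_union (disjoint_compl_right.mono Set.inter_subset_left
      Set.inter_subset_left) (hA.compl.inter hB.compl)).symm
  have hAB : μ.real (A ∩ B) = p / 2 := by
    rw [div_eq_iff hp0.ne'] at hβ
    exact hβ.trans (by ring)
  have hB' : μ.real B = 1 - α := by
    linarith [measureReal_inter_add_compl_inter_compl (μ := μ) hA hB]
  have hvar : 0 < α * (1 - α) := mul_pos hα0 (by linarith)
  have hcorr : corr μ T L = (p / 2 - α * (1 - α)) / (α * (1 - α)) := by
    rw [← indicator_setOf_eq_one_eq_self hT01, ← indicator_setOf_eq_one_eq_self hL01,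
      corr_indicator_one hA hB, hAB, hα', hB', sub_sub_cancel, mul_comm (1 - α),
      Real.sqrt_mul_self hvar.le]
  refine ⟨?_, by linarith⟩
  rw [hcorr, mul_assoc 2 α, mul_assoc 2, mul_div_cancel₀ _ hvar.ne']
  ring

theorem stmt10 {Ω : Type*} [MeasurableSpace Ω] (μ : Measure Ω) [IsProbabilityMeasure μ]
    (T L : Ω → ℝ) (hTm : Measurable T) (hLm : Measurable L)
    (hT01 : ∀ ω, T ω = 0 ∨ T ω = 1) (hL01 : ∀ ω, L ω = 0 ∨ L ω = 1)
    (α p : ℝ)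
    (hα : α = (μ {ω | T ω = 1}).toReal)
    (hp : p = (μ {ω | T ω = L ω}).toReal)
    (hβ : (μ {ω | T ω = 1 ∧ L ω = 1}).toReal / p = 1 / 2)
    (hα0 : 0 < α) (hα1 : α < 1) (hp0 : 0 < p)
    (hL0 : 0 < (μ {ω | L ω = 1}).toReal) (hL1 : (μ {ω | L ω = 1}).toReal < 1) :
    p = 2 * α * (1 - α) + 2 * α * (1 - α) * corr μ T L ∧ 0 < 2 * α * (1 - α) :=
  stmt10_general μ T L hTm hLm hT01 hL01 α p hα hp hβ hα0 hα1 hp0
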